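/- For the Wright-Fisher process, the fixation-probability functionals 𝖥^{(i)}, i = 1,...,n, defined by 𝖥^{(i)}(x) = lim_{m→∞} ⟨ê_i, 𝒯^m δ_x⟩, satisfy 𝖥^{(i)}(e_j) = δ_{ij} on the vertices, are fixed points of the adjoint operator 𝒯†, and form a basis of the space of linear conservation laws of 𝒯; in particular that space has dimension n. -/

import Mathlib

open Finset Filter

/-- The fixation-probability functionals `F i x = lim_m (𝒯^m δ_x)(e i)` of an absorbing
Markov chain whose only absorbing states are the vertices `e 1, …, e n` and for which
`𝒯^m P` converges to a combination of vertex point masses, satisfy `F i (e j) = δ_{ij}`,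
are fixed points of the adjoint transition operator, and form a basis of the space of
linear conservation laws. -/
theorem fixation_functionals_basis {S : Type*} [Fintype S] [DecidableEq S] {n : ℕ}
    (Θ : S → S → ℝ) (hnn : ∀ y x, 0 ≤ Θ y x) (hrow : ∀ y, ∑ x, Θ y x = 1)
    (e : Fin n → S) (he : Function.Injective e)
    (hvert : ∀ j x, Θ (e j) x = if x = e j then 1 else 0)
    (T : (S → ℝ) → (S → ℝ))
    (hT : ∀ P x, T P x = ∑ y, Θ y x * P y)
    (habs : ∀ P : S → ℝ, ∃ c : Fin n → ℝ,
      Tendsto (fun m => T^[m] P) atTop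
        (nhds fun x => ∑ i, c i * (if x = e i then (1:ℝ) else 0)))
    (F : Fin n → S → ℝ)
    (hF : ∀ i x, Tendsto
        (fun m => T^[m] (fun z => if z = x then (1:ℝ) else 0) (e i))
        atTop (nhds (F i x))) :
    (∀ i j, F i (e j) = if i = j then (1:ℝ) else 0) ∧
    (∀ i y, ∑ x, Θ y x * F i x = F i y) ∧
    (∀ w : S → ℝ, (∀ y, ∑ x, Θ y x * w x = w y) →
      ∃! c : Fin n → ℝ, w = fun x => ∑ i, c i * F i x) := by
  -- linearity of iterates of T
  have hlin : ∀ (m : ℕ) (a : S → ℝ) (g : S → S → ℝ),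
      T^[m] (fun z => ∑ x, a x * g x z) = fun z => ∑ x, a x * T^[m] (g x) z := by
    intro m
    induction m with
    | zero => intro a g; simp
    | succ m ih =>
      intro a g
      have h1 : T (fun z => ∑ x, a x * g x z) = fun z => ∑ x, a x * T (g x) z := by
        funext z
        simp only [hT, Finset.mul_sum]
        rw [Finset.sum_comm]
        exact Finset.sum_congr rfl fun x _ => Finset.sum_congr rfl fun y _ => by ring
      rw [Function.iterate_succ_apply, h1, ih a (fun x => T (g x))]
      funext z
      exact Finset.sum_congr rfl fun x _ => by rw [Function.iterate_succ_apply]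
  -- the vertex point masses are fixed points of T
  have hfix : ∀ (j : Fin n) (m : ℕ),
      T^[m] (fun z => if z = e j then (1:ℝ) else 0) = fun z => if z = e j then 1 else 0 := by
    intro j m
    apply Function.iterate_fixed
    funext z
    rw [hT]
    have h1 : (∑ y, Θ y z * (if y = e j then (1:ℝ) else 0)) = Θ (e j) z := by simp
    rw [h1, hvert]
  -- Part 1
  have hpart1 : ∀ i j, F i (e j) = if i = j then (1:ℝ) else 0 := by
    intro i j
    have h1 : Tendsto (fun m => T^[m] (fun z => if z = e j then (1:ℝ) else 0) (e i)) atTop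
        (nhds (if e i = e j then (1:ℝ) else 0)) := by
      simp only [hfix j]
      exact tendsto_const_nhds
    have h2 := tendsto_nhds_unique (hF i (e j)) h1
    rw [h2]
    simp [he.eq_iff]
  -- Part 2
  have hpart2 : ∀ i y, ∑ x, Θ y x * F i x = F i y := by
    intro i y
    have h1 : Tendsto (fun m => T^[m+1] (fun z => if z = y then (1:ℝ) else 0) (e i)) atTop
        (nhds (F i y)) := by
      have := (hF i y).comp (tendsto_add_atTop_nat 1)
      exact this
    have h2 : ∀ m, T^[m+1] (fun z => if z = y then (1:ℝ) else 0) (e i)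
        = ∑ x, Θ y x * T^[m] (fun z => if z = x then (1:ℝ) else 0) (e i) := by
      intro m
      rw [Function.iterate_succ_apply]
      have hTδ : T (fun z => if z = y then (1:ℝ) else 0)
          = fun z => ∑ x, Θ y x * (if z = x then (1:ℝ) else 0) := by
        funext z
        rw [hT]
        simp
      rw [hTδ, hlin m (Θ y) (fun x z => if z = x then (1:ℝ) else 0)]
    have h3 : Tendsto (fun m => ∑ x, Θ y x * T^[m] (fun z => if z = x then (1:ℝ) else 0) (e i))
        atTop (nhds (∑ x, Θ y x * F i x)) :=
      tendsto_finset_sum _ fun x _ => (hF i x).const_mul _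
    exact tendsto_nhds_unique h3 (h1.congr h2)
  refine ⟨hpart1, hpart2, ?_⟩
  intro w hw
  have key : ∀ x, w x = ∑ i, w (e i) * F i x := by
    intro x
    obtain ⟨c, hc⟩ := habs (fun z => if z = x then (1:ℝ) else 0)
    have hFc : ∀ i, F i x = c i := by
      intro i
      have h1 := tendsto_pi_nhds.mp hc (e i)
      have h2 : (∑ j, c j * (if e i = e j then (1:ℝ) else 0)) = c i := by
        simp [he.eq_iff]
      rw [← h2]
      exact tendsto_nhds_unique (hF i x) h1
    have hcons : ∀ m, ∑ z, T^[m] (fun z => if z = x then (1:ℝ) else 0) z * w z = w x := by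
      intro m
      induction m with
      | zero => simp
      | succ m ih =>
        rw [Function.iterate_succ_apply']
        calc ∑ z, T (T^[m] (fun z => if z = x then (1:ℝ) else 0)) z * w z
            = ∑ y, T^[m] (fun z => if z = x then (1:ℝ) else 0) y
                * ∑ z, Θ y z * w z := by
              simp only [hT, Finset.sum_mul, Finset.mul_sum]
              rw [Finset.sum_comm]
              exact Finset.sum_congr rfl fun y _ => Finset.sum_congr rfl fun z _ => by ring
          _ = ∑ y, T^[m] (fun z => if z = x then (1:ℝ) else 0) y * w y :=
              Finset.sum_congr rfl fun y _ => by rw [hw y]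
          _ = w x := ih
    have h2 : Tendsto (fun m => ∑ z, T^[m] (fun z => if z = x then (1:ℝ) else 0) z * w z)
        atTop (nhds (w x)) := by
      simp only [hcons]
      exact tendsto_const_nhds
    have hlim : Tendsto (fun m => ∑ z, T^[m] (fun z => if z = x then (1:ℝ) else 0) z * w z)
        atTop (nhds (∑ z, (∑ i, c i * (if z = e i then (1:ℝ) else 0)) * w z)) :=
      tendsto_finset_sum _ fun z _ => (tendsto_pi_nhds.mp hc z).mul_const _
    have heq := tendsto_nhds_unique h2 hlim
    rw [heq]
    simp only [Finset.sum_mul]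
    rw [Finset.sum_comm]
    refine Finset.sum_congr rfl fun i _ => ?_
    rw [hFc i]
    calc ∑ z, c i * (if z = e i then (1:ℝ) else 0) * w z
        = ∑ z, (if z = e i then c i * w z else 0) :=
          Finset.sum_congr rfl fun z _ => by split <;> simp
      _ = c i * w (e i) := by simp
      _ = w (e i) * c i := mul_comm _ _
  refine ⟨fun i => w (e i), ?_, ?_⟩
  · funext x
    rw [key x]
  · intro c' hc'
    funext j
    have h1 := congrFun hc' (e j)
    simp only [hpart1] at h1
    rw [h1]
    simp
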